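/- arXiv:2309.12093 — 3 statements merged into one kernel-verified Lean document; each statement's English description precedes it below -/
import Mathlib

section
/- Let M be a unital module monoidal category over a braided monoidal category V, let (M,F) be the associated pair (F(v) := v▷1_M with half-braiding β_{F(v),t} := (α²_{v,t,1_M})⁻¹∘(id_v▷(r_t⁻¹∘l_t))∘α¹_{v,1_M,t}, φ₂ := (id▷r_{1_M})∘m⁻¹∘(id▷α²)∘α¹, φ₀ := (l^▷_{1_M})⁻¹), and let M' := Ψ(M,F) be the unital module monoidal category induced by this pair (action v▷'m = (v▷1_M)⊗m). Then (Id_M, id, id, s), where Id_M is the identity functor with φ₂ = id, φ₀ = id and s_{v,m} := (id_v▷l_m)∘α¹_{v,1_M,m}, is a unital module monoidal functor M → M', and it is an equivalence of unital module monoidal categories whose underlying functor is the identity (an Id-equivalence). -/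
open CategoryTheory MonoidalCategory Category

universe v₁ v₂ v₃ v₄ u₁ u₂ u₃ u₄

namespace ModMonPaper

/-! ### Strong monoidal functors as data plus property -/

section MonFunctor

variable (V : Type u₁) [Category.{v₁} V] [MonoidalCategory V]
variable (W : Type u₂) [Category.{v₂} W] [MonoidalCategory W]
variable (X : Type u₃) [Category.{v₃} X] [MonoidalCategory X]

/-- The data of a (strong) monoidal functor: a functor together with the
coherence isomorphisms `φ₂` and `φ₀`. -/
structure MonFunctorData where
  F : V ⥤ W
  φ₂ : ∀ x y : V, F.obj x ⊗ F.obj y ≅ F.obj (x ⊗ y)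
  φ₀ : 𝟙_ W ≅ F.obj (𝟙_ V)

variable {V W X}

/-- The axioms of a (strong) monoidal functor. -/
structure MonFunctorData.IsMonFunctor (D : MonFunctorData V W) : Prop where
  φ₂_natural : ∀ {x y x' y' : V} (f : x ⟶ x') (g : y ⟶ y'),
    (D.F.map f ⊗ₘ D.F.map g) ≫ (D.φ₂ x' y').hom = (D.φ₂ x y).hom ≫ D.F.map (f ⊗ₘ g)
  hexagon : ∀ x y z : V,
    ((D.φ₂ x y).hom ⊗ₘ 𝟙 (D.F.obj z)) ≫ (D.φ₂ (x ⊗ y) z).hom ≫ D.F.map (α_ x y z).hom =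
      (α_ (D.F.obj x) (D.F.obj y) (D.F.obj z)).hom ≫ (𝟙 (D.F.obj x) ⊗ₘ (D.φ₂ y z).hom) ≫
        (D.φ₂ x (y ⊗ z)).hom
  φ₀_left : ∀ x : V,
    (D.φ₀.hom ⊗ₘ 𝟙 (D.F.obj x)) ≫ (D.φ₂ (𝟙_ V) x).hom ≫ D.F.map (λ_ x).hom =
      (λ_ (D.F.obj x)).hom
  φ₀_right : ∀ x : V,
    (𝟙 (D.F.obj x) ⊗ₘ D.φ₀.hom) ≫ (D.φ₂ x (𝟙_ V)).hom ≫ D.F.map (ρ_ x).hom =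
      (ρ_ (D.F.obj x)).hom

variable (V) in
/-- The identity monoidal functor data. -/
def MonFunctorData.id : MonFunctorData V V :=
  ⟨𝟭 V, fun x y => Iso.refl (x ⊗ y), Iso.refl (𝟙_ V)⟩

/-- Composition of monoidal functor data. -/
def MonFunctorData.comp (D : MonFunctorData V W) (E : MonFunctorData W X) :
    MonFunctorData V X :=
  ⟨D.F ⋙ E.F, fun x y => E.φ₂ (D.F.obj x) (D.F.obj y) ≪≫ E.F.mapIso (D.φ₂ x y),
    E.φ₀ ≪≫ E.F.mapIso D.φ₀⟩

/-- A natural transformation between (strong) monoidal functors is monoidal if it is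
compatible with `φ₂` and `φ₀`. -/
def IsMonNT (D E : MonFunctorData V W) (τ : D.F ⟶ E.F) : Prop :=
  (∀ x y : V, (D.φ₂ x y).hom ≫ τ.app (x ⊗ y) = (τ.app x ⊗ₘ τ.app y) ≫ (E.φ₂ x y).hom) ∧
    D.φ₀.hom ≫ τ.app (𝟙_ V) = E.φ₀.hom

/-- A braided monoidal functor: a monoidal functor compatible with the braidings. -/
def MonFunctorData.IsBraidedFunctor [BraidedCategory V] [BraidedCategory W]
    (D : MonFunctorData V W) : Prop :=
  D.IsMonFunctor ∧
    ∀ x y : V, (D.φ₂ x y).hom ≫ D.F.map (β_ x y).hom =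
      (β_ (D.F.obj x) (D.F.obj y)).hom ≫ (D.φ₂ y x).hom

end MonFunctor

/-! ### Module categories -/

section ModuleCat

variable (V : Type u₁) [Category.{v₁} V] [MonoidalCategory V]
variable (M : Type u₂) [Category.{v₂} M]
variable (M' : Type u₃) [Category.{v₃} M']

/-- The data of a left `V`-module category structure on `M`. -/
structure ModuleData where
  act : V → M → M
  actMap : ∀ {v w : V} {x y : M}, (v ⟶ w) → (x ⟶ y) → (act v x ⟶ act w y)
  massoc : ∀ (v w : V) (x : M), act (v ⊗ w) x ≅ act v (act w x)
  munit : ∀ x : M, act (𝟙_ V) x ≅ x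

variable {V M M'}

/-- The axioms of a left module category. -/
structure ModuleData.IsModule (P : ModuleData V M) : Prop where
  actMap_id : ∀ (v : V) (x : M), P.actMap (𝟙 v) (𝟙 x) = 𝟙 (P.act v x)
  actMap_comp : ∀ {v w u : V} {x y z : M} (f : v ⟶ w) (g : w ⟶ u) (h : x ⟶ y) (k : y ⟶ z),
    P.actMap (f ≫ g) (h ≫ k) = P.actMap f h ≫ P.actMap g k
  massoc_natural : ∀ {v v' w w' : V} {x x' : M} (f : v ⟶ v') (g : w ⟶ w') (h : x ⟶ x'),
    P.actMap (f ⊗ₘ g) h ≫ (P.massoc v' w' x').hom =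
      (P.massoc v w x).hom ≫ P.actMap f (P.actMap g h)
  munit_natural : ∀ {x x' : M} (h : x ⟶ x'),
    P.actMap (𝟙 (𝟙_ V)) h ≫ (P.munit x').hom = (P.munit x).hom ≫ h
  pentagon : ∀ (u v w : V) (x : M),
    P.actMap (α_ u v w).hom (𝟙 x) ≫ (P.massoc u (v ⊗ w) x).hom ≫
        P.actMap (𝟙 u) (P.massoc v w x).hom =
      (P.massoc (u ⊗ v) w x).hom ≫ (P.massoc u v (P.act w x)).hom
  triangle : ∀ (v : V) (x : M),
    (P.massoc v (𝟙_ V) x).hom ≫ P.actMap (𝟙 v) (P.munit x).hom = P.actMap (ρ_ v).hom (𝟙 x)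

/-- Acting with a fixed object of `V` on an isomorphism of `M`. -/
def ModuleData.actIso (P : ModuleData V M)
    (hid : ∀ (v : V) (x : M), P.actMap (𝟙 v) (𝟙 x) = 𝟙 (P.act v x))
    (hcomp : ∀ {v w u : V} {x y z : M} (f : v ⟶ w) (g : w ⟶ u) (h : x ⟶ y) (k : y ⟶ z),
      P.actMap (f ≫ g) (h ≫ k) = P.actMap f h ≫ P.actMap g k)
    (v : V) {x y : M} (e : x ≅ y) : P.act v x ≅ P.act v y where
  hom := P.actMap (𝟙 v) e.hom
  inv := P.actMap (𝟙 v) e.inv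
  hom_inv_id := by rw [← hcomp]; simp [hid]
  inv_hom_id := by rw [← hcomp]; simp [hid]

/-- The data of a module functor. -/
structure ModuleFunctorData (P : ModuleData V M) (P' : ModuleData V M') where
  F : M ⥤ M'
  s : ∀ (v : V) (x : M), P'.act v (F.obj x) ≅ F.obj (P.act v x)

/-- The axioms of a module functor. -/
structure ModuleFunctorData.IsModuleFunctor {P : ModuleData V M} {P' : ModuleData V M'}
    (D : ModuleFunctorData P P') : Prop where
  s_natural : ∀ {v w : V} {x y : M} (f : v ⟶ w) (g : x ⟶ y),
    P'.actMap f (D.F.map g) ≫ (D.s w y).hom = (D.s v x).hom ≫ D.F.map (P.actMap f g)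
  pentagon : ∀ (v w : V) (x : M),
    (D.s (v ⊗ w) x).hom ≫ D.F.map (P.massoc v w x).hom =
      (P'.massoc v w (D.F.obj x)).hom ≫ P'.actMap (𝟙 v) (D.s w x).hom ≫
        (D.s v (P.act w x)).hom
  triangle : ∀ x : M,
    (D.s (𝟙_ V) x).hom ≫ D.F.map (P.munit x).hom = (P'.munit (D.F.obj x)).hom

/-- The identity module functor data. -/
def ModuleFunctorData.id (P : ModuleData V M) : ModuleFunctorData P P :=
  ⟨𝟭 M, fun v x => Iso.refl (P.act v x)⟩

/-- Composition of module functor data. -/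
def ModuleFunctorData.comp {M'' : Type u₄} [Category.{v₄} M''] {P : ModuleData V M}
    {P' : ModuleData V M'} {P'' : ModuleData V M''}
    (D : ModuleFunctorData P P') (E : ModuleFunctorData P' P'') :
    ModuleFunctorData P P'' :=
  ⟨D.F ⋙ E.F, fun v x => E.s v (D.F.obj x) ≪≫ E.F.mapIso (D.s v x)⟩

/-- Module natural transformations. -/
def IsModuleNT {P : ModuleData V M} {P' : ModuleData V M'}
    (D E : ModuleFunctorData P P') (τ : D.F ⟶ E.F) : Prop :=
  ∀ (v : V) (x : M),
    (D.s v x).hom ≫ τ.app (P.act v x) = P'.actMap (𝟙 v) (τ.app x) ≫ (E.s v x).hom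

end ModuleCat

end ModMonPaper
/-! ### Unital module monoidal categories -/

namespace ModMonPaper

section UMM

variable (V : Type u₁) [Category.{v₁} V] [MonoidalCategory V]
variable (M : Type u₂) [Category.{v₂} M] [MonoidalCategory M]
variable (M' : Type u₃) [Category.{v₃} M'] [MonoidalCategory M']

/-- The data of a unital module monoidal category over `V` on the (unital) monoidal
category `M`: a module category structure together with the coherences `α₁` and `α₂`. -/
structure ModMonData extends ModuleData V M where
  α₁ : ∀ (v : V) (x y : M), act v x ⊗ y ≅ act v (x ⊗ y)
  α₂ : ∀ (v : V) (x y : M), x ⊗ act v y ≅ act v (x ⊗ y)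

variable {V M M'}

/-- The axioms of a unital module monoidal category over a braided category `V`. -/
structure ModMonData.IsModMon [BraidedCategory V] (P : ModMonData V M) : Prop where
  toIsModule : P.toModuleData.IsModule
  α₁_natural : ∀ {v v' : V} {x x' y y' : M} (f : v ⟶ v') (g : x ⟶ x') (h : y ⟶ y'),
    (P.actMap f g ⊗ₘ h) ≫ (P.α₁ v' x' y').hom = (P.α₁ v x y).hom ≫ P.actMap f (g ⊗ₘ h)
  α₂_natural : ∀ {v v' : V} {x x' y y' : M} (f : v ⟶ v') (g : x ⟶ x') (h : y ⟶ y'),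
    (g ⊗ₘ P.actMap f h) ≫ (P.α₂ v' x' y').hom = (P.α₂ v x y).hom ≫ P.actMap f (g ⊗ₘ h)
  α₁_assoc : ∀ (v : V) (l m n : M),
    ((P.α₁ v l m).hom ⊗ₘ 𝟙 n) ≫ (P.α₁ v (l ⊗ m) n).hom ≫ P.actMap (𝟙 v) (α_ l m n).hom =
      (α_ (P.act v l) m n).hom ≫ (P.α₁ v l (m ⊗ n)).hom
  α₁_massoc : ∀ (v w : V) (m n : M),
    ((P.massoc v w m).hom ⊗ₘ 𝟙 n) ≫ (P.α₁ v (P.act w m) n).hom ≫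
        P.actMap (𝟙 v) (P.α₁ w m n).hom =
      (P.α₁ (v ⊗ w) m n).hom ≫ (P.massoc v w (m ⊗ n)).hom
  α₂_assoc : ∀ (v : V) (l m n : M),
    (α_ l m (P.act v n)).hom ≫ (𝟙 l ⊗ₘ (P.α₂ v m n).hom) ≫ (P.α₂ v l (m ⊗ n)).hom =
      (P.α₂ v (l ⊗ m) n).hom ≫ P.actMap (𝟙 v) (α_ l m n).hom
  α₂_massoc : ∀ (v w : V) (m n : M),
    (𝟙 m ⊗ₘ (P.massoc v w n).hom) ≫ (P.α₂ v m (P.act w n)).hom ≫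
        P.actMap (𝟙 v) (P.α₂ w m n).hom =
      (P.α₂ (v ⊗ w) m n).hom ≫ (P.massoc v w (m ⊗ n)).hom
  α₁_α₂ : ∀ (v : V) (l m n : M),
    ((P.α₂ v l m).hom ⊗ₘ 𝟙 n) ≫ (P.α₁ v (l ⊗ m) n).hom ≫ P.actMap (𝟙 v) (α_ l m n).hom =
      (α_ l (P.act v m) n).hom ≫ (𝟙 l ⊗ₘ (P.α₁ v m n).hom) ≫ (P.α₂ v l (m ⊗ n)).hom
  braiding_act : ∀ (v w : V) (m n : M),
    (P.α₂ v (P.act w m) n).hom ≫ P.actMap (𝟙 v) (P.α₁ w m n).hom ≫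
        (P.massoc v w (m ⊗ n)).inv ≫ P.actMap (β_ v w).hom (𝟙 (m ⊗ n)) =
      (P.α₁ w m (P.act v n)).hom ≫ P.actMap (𝟙 w) (P.α₂ v m n).hom ≫
        (P.massoc w v (m ⊗ n)).inv

/-- The data of a unital module monoidal functor. -/
structure UMMFunctorData (P : ModMonData V M) (P' : ModMonData V M') where
  F : M ⥤ M'
  φ₂ : ∀ x y : M, F.obj x ⊗ F.obj y ≅ F.obj (x ⊗ y)
  φ₀ : 𝟙_ M' ≅ F.obj (𝟙_ M)
  s : ∀ (v : V) (x : M), P'.act v (F.obj x) ≅ F.obj (P.act v x)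

/-- The axioms of a unital module monoidal functor. -/
structure UMMFunctorData.IsUMMFunctor {P : ModMonData V M} {P' : ModMonData V M'}
    (D : UMMFunctorData P P') : Prop where
  φ₂_natural : ∀ {x x' y y' : M} (f : x ⟶ x') (g : y ⟶ y'),
    (D.F.map f ⊗ₘ D.F.map g) ≫ (D.φ₂ x' y').hom = (D.φ₂ x y).hom ≫ D.F.map (f ⊗ₘ g)
  hexagon : ∀ x y z : M,
    ((D.φ₂ x y).hom ⊗ₘ 𝟙 (D.F.obj z)) ≫ (D.φ₂ (x ⊗ y) z).hom ≫ D.F.map (α_ x y z).hom =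
      (α_ (D.F.obj x) (D.F.obj y) (D.F.obj z)).hom ≫ (𝟙 (D.F.obj x) ⊗ₘ (D.φ₂ y z).hom) ≫
        (D.φ₂ x (y ⊗ z)).hom
  φ₀_left : ∀ x : M,
    (D.φ₀.hom ⊗ₘ 𝟙 (D.F.obj x)) ≫ (D.φ₂ (𝟙_ M) x).hom ≫ D.F.map (λ_ x).hom =
      (λ_ (D.F.obj x)).hom
  φ₀_right : ∀ x : M,
    (𝟙 (D.F.obj x) ⊗ₘ D.φ₀.hom) ≫ (D.φ₂ x (𝟙_ M)).hom ≫ D.F.map (ρ_ x).hom =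
      (ρ_ (D.F.obj x)).hom
  s_natural : ∀ {v w : V} {x y : M} (f : v ⟶ w) (g : x ⟶ y),
    P'.actMap f (D.F.map g) ≫ (D.s w y).hom = (D.s v x).hom ≫ D.F.map (P.actMap f g)
  s_pentagon : ∀ (v w : V) (x : M),
    (D.s (v ⊗ w) x).hom ≫ D.F.map (P.massoc v w x).hom =
      (P'.massoc v w (D.F.obj x)).hom ≫ P'.actMap (𝟙 v) (D.s w x).hom ≫
        (D.s v (P.act w x)).hom
  s_triangle : ∀ x : M,
    (D.s (𝟙_ V) x).hom ≫ D.F.map (P.munit x).hom = (P'.munit (D.F.obj x)).hom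
  compα₁ : ∀ (v : V) (x y : M),
    (P'.α₁ v (D.F.obj x) (D.F.obj y)).hom ≫ P'.actMap (𝟙 v) (D.φ₂ x y).hom ≫
        (D.s v (x ⊗ y)).hom =
      ((D.s v x).hom ⊗ₘ 𝟙 (D.F.obj y)) ≫ (D.φ₂ (P.act v x) y).hom ≫
        D.F.map (P.α₁ v x y).hom
  compα₂ : ∀ (v : V) (x y : M),
    (P'.α₂ v (D.F.obj x) (D.F.obj y)).hom ≫ P'.actMap (𝟙 v) (D.φ₂ x y).hom ≫
        (D.s v (x ⊗ y)).hom =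
      (𝟙 (D.F.obj x) ⊗ₘ (D.s v y).hom) ≫ (D.φ₂ x (P.act v y)).hom ≫
        D.F.map (P.α₂ v x y).hom

/-- The identity unital module monoidal functor data. -/
def UMMFunctorData.id (P : ModMonData V M) : UMMFunctorData P P :=
  ⟨𝟭 M, fun x y => Iso.refl (x ⊗ y), Iso.refl (𝟙_ M), fun v x => Iso.refl (P.act v x)⟩

/-- Composition of unital module monoidal functor data. -/
def UMMFunctorData.comp {M'' : Type u₄} [Category.{v₄} M''] [MonoidalCategory M'']
    {P : ModMonData V M} {P' : ModMonData V M'} {P'' : ModMonData V M''}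
    (D : UMMFunctorData P P') (E : UMMFunctorData P' P'') : UMMFunctorData P P'' :=
  ⟨D.F ⋙ E.F,
    fun x y => E.φ₂ (D.F.obj x) (D.F.obj y) ≪≫ E.F.mapIso (D.φ₂ x y),
    E.φ₀ ≪≫ E.F.mapIso D.φ₀,
    fun v x => E.s v (D.F.obj x) ≪≫ E.F.mapIso (D.s v x)⟩

/-- Unital module monoidal natural transformations. -/
def IsUMMNT {P : ModMonData V M} {P' : ModMonData V M'}
    (D E : UMMFunctorData P P') (τ : D.F ⟶ E.F) : Prop :=
  (∀ x y : M, (D.φ₂ x y).hom ≫ τ.app (x ⊗ y) = (τ.app x ⊗ₘ τ.app y) ≫ (E.φ₂ x y).hom) ∧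
    (D.φ₀.hom ≫ τ.app (𝟙_ M) = E.φ₀.hom) ∧
    ∀ (v : V) (x : M), (D.s v x).hom ≫ τ.app (P.act v x) =
      P'.actMap (𝟙 v) (τ.app x) ≫ (E.s v x).hom

/-- `D` is an equivalence of unital module monoidal categories. -/
def UMMFunctorData.IsEquiv {P : ModMonData V M} {P' : ModMonData V M'}
    (D : UMMFunctorData P P') : Prop :=
  ∃ E : UMMFunctorData P' P, E.IsUMMFunctor ∧
    ∃ (η : (UMMFunctorData.id P).F ≅ (UMMFunctorData.comp D E).F)
      (ε : (UMMFunctorData.comp E D).F ≅ (UMMFunctorData.id P').F),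
      IsUMMNT (UMMFunctorData.id P) (UMMFunctorData.comp D E) η.hom ∧
        IsUMMNT (UMMFunctorData.comp E D) (UMMFunctorData.id P') ε.hom

end UMM

end ModMonPaper
/-! ### Pairs: braided central monoidal functors -/

namespace ModMonPaper

section Central

variable (V : Type u₁) [Category.{v₁} V] [MonoidalCategory V] [BraidedCategory V]
variable (T : Type u₂) [Category.{v₂} T] [MonoidalCategory T]
variable (T' : Type u₃) [Category.{v₃} T'] [MonoidalCategory T']

/-- The data of a braided central monoidal functor `V ⟶ T`, i.e. the data of a pair
`(T, F)`: the underlying functor `F`, the half-braidings of the chosen lift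
`F^Z : V ⟶ Z(T)` to the Drinfeld center, and the monoidal structure `φ₂`, `φ₀`. -/
structure CentralData where
  obj : V → T
  map : ∀ {v w : V}, (v ⟶ w) → (obj v ⟶ obj w)
  halfBraiding : ∀ (v : V) (t : T), obj v ⊗ t ≅ t ⊗ obj v
  φ₂ : ∀ v w : V, obj v ⊗ obj w ≅ obj (v ⊗ w)
  φ₀ : 𝟙_ T ≅ obj (𝟙_ V)

variable {V T T'}

/-- The axioms making `C : CentralData V T` into a braided central monoidal functor,
i.e. a pair `(T, F)`: `F` is a functor; each `(F v, halfBraiding v)` is an object of the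
Drinfeld center `Z(T)`; `F f`, `φ₂` and `φ₀` are morphisms in `Z(T)`; the lift is a
braided (strong) monoidal functor. -/
structure CentralData.IsCentral (C : CentralData V T) : Prop where
  map_id : ∀ v : V, C.map (𝟙 v) = 𝟙 (C.obj v)
  map_comp : ∀ {u v w : V} (f : u ⟶ v) (g : v ⟶ w), C.map (f ≫ g) = C.map f ≫ C.map g
  halfBraiding_natural : ∀ (v : V) {t t' : T} (f : t ⟶ t'),
    (𝟙 (C.obj v) ⊗ₘ f) ≫ (C.halfBraiding v t').hom =
      (C.halfBraiding v t).hom ≫ (f ⊗ₘ 𝟙 (C.obj v))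
  halfBraiding_hex : ∀ (v : V) (x y : T),
    (α_ (C.obj v) x y).hom ≫ (C.halfBraiding v (x ⊗ y)).hom ≫ (α_ x y (C.obj v)).hom =
      ((C.halfBraiding v x).hom ⊗ₘ 𝟙 y) ≫ (α_ x (C.obj v) y).hom ≫
        (𝟙 x ⊗ₘ (C.halfBraiding v y).hom)
  map_central : ∀ {v w : V} (f : v ⟶ w) (t : T),
    (C.map f ⊗ₘ 𝟙 t) ≫ (C.halfBraiding w t).hom =
      (C.halfBraiding v t).hom ≫ (𝟙 t ⊗ₘ C.map f)
  φ₂_natural : ∀ {v v' w w' : V} (f : v ⟶ v') (g : w ⟶ w'),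
    (C.map f ⊗ₘ C.map g) ≫ (C.φ₂ v' w').hom = (C.φ₂ v w).hom ≫ C.map (f ⊗ₘ g)
  φ₂_central : ∀ (v w : V) (t : T),
    ((C.φ₂ v w).hom ⊗ₘ 𝟙 t) ≫ (C.halfBraiding (v ⊗ w) t).hom =
      ((α_ (C.obj v) (C.obj w) t).hom ≫ (𝟙 (C.obj v) ⊗ₘ (C.halfBraiding w t).hom) ≫
        (α_ (C.obj v) t (C.obj w)).inv ≫ ((C.halfBraiding v t).hom ⊗ₘ 𝟙 (C.obj w)) ≫
          (α_ t (C.obj v) (C.obj w)).hom) ≫ (𝟙 t ⊗ₘ (C.φ₂ v w).hom)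
  φ₀_central : ∀ t : T,
    (C.φ₀.hom ⊗ₘ 𝟙 t) ≫ (C.halfBraiding (𝟙_ V) t).hom =
      ((λ_ t).hom ≫ (ρ_ t).inv) ≫ (𝟙 t ⊗ₘ C.φ₀.hom)
  hexagon : ∀ u v w : V,
    ((C.φ₂ u v).hom ⊗ₘ 𝟙 (C.obj w)) ≫ (C.φ₂ (u ⊗ v) w).hom ≫ C.map (α_ u v w).hom =
      (α_ (C.obj u) (C.obj v) (C.obj w)).hom ≫ (𝟙 (C.obj u) ⊗ₘ (C.φ₂ v w).hom) ≫
        (C.φ₂ u (v ⊗ w)).hom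
  φ₀_left : ∀ v : V,
    (C.φ₀.hom ⊗ₘ 𝟙 (C.obj v)) ≫ (C.φ₂ (𝟙_ V) v).hom ≫ C.map (λ_ v).hom =
      (λ_ (C.obj v)).hom
  φ₀_right : ∀ v : V,
    (𝟙 (C.obj v) ⊗ₘ C.φ₀.hom) ≫ (C.φ₂ v (𝟙_ V)).hom ≫ C.map (ρ_ v).hom =
      (ρ_ (C.obj v)).hom
  braided : ∀ v w : V,
    (C.φ₂ v w).hom ≫ C.map (β_ v w).hom =
      (C.halfBraiding v (C.obj w)).hom ≫ (C.φ₂ w v).hom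

/-- The data of a morphism of pairs `(T, C) ⟶ (T', C')`. -/
structure PairHomData (C : CentralData V T) (C' : CentralData V T') where
  G : T ⥤ T'
  φ₂ : ∀ x y : T, G.obj x ⊗ G.obj y ≅ G.obj (x ⊗ y)
  φ₀ : 𝟙_ T' ≅ G.obj (𝟙_ T)
  γ : ∀ v : V, C'.obj v ≅ G.obj (C.obj v)

/-- The axioms of a morphism of pairs: `(G, φ₂, φ₀)` is a (strong) monoidal functor and
`γ : F' ⟹ G ∘ F` is a monoidal natural isomorphism compatible with the half-braidings. -/
structure PairHomData.IsPairHom {C : CentralData V T} {C' : CentralData V T'}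
    (D : PairHomData C C') : Prop where
  φ₂_natural : ∀ {x x' y y' : T} (f : x ⟶ x') (g : y ⟶ y'),
    (D.G.map f ⊗ₘ D.G.map g) ≫ (D.φ₂ x' y').hom = (D.φ₂ x y).hom ≫ D.G.map (f ⊗ₘ g)
  hexagon : ∀ x y z : T,
    ((D.φ₂ x y).hom ⊗ₘ 𝟙 (D.G.obj z)) ≫ (D.φ₂ (x ⊗ y) z).hom ≫ D.G.map (α_ x y z).hom =
      (α_ (D.G.obj x) (D.G.obj y) (D.G.obj z)).hom ≫ (𝟙 (D.G.obj x) ⊗ₘ (D.φ₂ y z).hom) ≫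
        (D.φ₂ x (y ⊗ z)).hom
  φ₀_left : ∀ x : T,
    (D.φ₀.hom ⊗ₘ 𝟙 (D.G.obj x)) ≫ (D.φ₂ (𝟙_ T) x).hom ≫ D.G.map (λ_ x).hom =
      (λ_ (D.G.obj x)).hom
  φ₀_right : ∀ x : T,
    (𝟙 (D.G.obj x) ⊗ₘ D.φ₀.hom) ≫ (D.φ₂ x (𝟙_ T)).hom ≫ D.G.map (ρ_ x).hom =
      (ρ_ (D.G.obj x)).hom
  γ_natural : ∀ {v w : V} (f : v ⟶ w),
    C'.map f ≫ (D.γ w).hom = (D.γ v).hom ≫ D.G.map (C.map f)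
  γ_tensor : ∀ v w : V,
    (C'.φ₂ v w).hom ≫ (D.γ (v ⊗ w)).hom =
      ((D.γ v).hom ⊗ₘ (D.γ w).hom) ≫ (D.φ₂ (C.obj v) (C.obj w)).hom ≫
        D.G.map (C.φ₂ v w).hom
  γ_unit : C'.φ₀.hom ≫ (D.γ (𝟙_ V)).hom = D.φ₀.hom ≫ D.G.map C.φ₀.hom
  γ_braiding : ∀ (v : V) (t : T),
    ((D.γ v).hom ⊗ₘ 𝟙 (D.G.obj t)) ≫ (D.φ₂ (C.obj v) t).hom ≫
        D.G.map (C.halfBraiding v t).hom =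
      (C'.halfBraiding v (D.G.obj t)).hom ≫ (𝟙 (D.G.obj t) ⊗ₘ (D.γ v).hom) ≫
        (D.φ₂ t (C.obj v)).hom

/-- The identity morphism of pairs. -/
def PairHomData.id (C : CentralData V T) : PairHomData C C :=
  ⟨𝟭 T, fun x y => Iso.refl (x ⊗ y), Iso.refl (𝟙_ T), fun v => Iso.refl (C.obj v)⟩

/-- Composition of morphisms of pairs. -/
def PairHomData.comp {T'' : Type u₄} [Category.{v₄} T''] [MonoidalCategory T'']
    {C : CentralData V T} {C' : CentralData V T'} {C'' : CentralData V T''}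
    (D : PairHomData C C') (E : PairHomData C' C'') : PairHomData C C'' :=
  ⟨D.G ⋙ E.G,
    fun x y => E.φ₂ (D.G.obj x) (D.G.obj y) ≪≫ E.G.mapIso (D.φ₂ x y),
    E.φ₀ ≪≫ E.G.mapIso D.φ₀,
    fun v => E.γ v ≪≫ E.G.mapIso (D.γ v)⟩

/-- 2-morphisms of pairs. -/
def IsPair2Mor {C : CentralData V T} {C' : CentralData V T'}
    (D E : PairHomData C C') (τ : D.G ⟶ E.G) : Prop :=
  (∀ x y : T, (D.φ₂ x y).hom ≫ τ.app (x ⊗ y) = (τ.app x ⊗ₘ τ.app y) ≫ (E.φ₂ x y).hom) ∧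
    (D.φ₀.hom ≫ τ.app (𝟙_ T) = E.φ₀.hom) ∧
    ∀ v : V, (D.γ v).hom ≫ τ.app (C.obj v) = (E.γ v).hom

/-- `D` is an equivalence of pairs. -/
def PairHomData.IsEquiv {C : CentralData V T} {C' : CentralData V T'}
    (D : PairHomData C C') : Prop :=
  ∃ E : PairHomData C' C, E.IsPairHom ∧
    ∃ (η : (PairHomData.id C).G ≅ (PairHomData.comp D E).G)
      (ε : (PairHomData.comp E D).G ≅ (PairHomData.id C').G),
      IsPair2Mor (PairHomData.id C) (PairHomData.comp D E) η.hom ∧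
        IsPair2Mor (PairHomData.comp E D) (PairHomData.id C') ε.hom

end Central

end ModMonPaper
/-! ### The 2-functor `Ψ` and the pair associated to a module monoidal category -/

namespace ModMonPaper

section Psi

variable {V : Type u₁} [Category.{v₁} V] [MonoidalCategory V] [BraidedCategory V]
variable {T : Type u₂} [Category.{v₂} T] [MonoidalCategory T]
variable {T' : Type u₃} [Category.{v₃} T'] [MonoidalCategory T']

/-- `Ψ` on objects: the unital module monoidal structure induced by a pair. -/
def PsiData (C : CentralData V T) : ModMonData V T where
  act v x := C.obj v ⊗ x
  actMap f g := C.map f ⊗ₘ g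
  massoc v w x := tensorIso (C.φ₂ v w).symm (Iso.refl x) ≪≫ α_ (C.obj v) (C.obj w) x
  munit x := tensorIso C.φ₀.symm (Iso.refl x) ≪≫ λ_ x
  α₁ v x y := α_ (C.obj v) x y
  α₂ v x y := (α_ x (C.obj v) y).symm ≪≫
    tensorIso (C.halfBraiding v x).symm (Iso.refl y) ≪≫ α_ (C.obj v) x y

theorem psiData_actMap_id (C : CentralData V T) (hC : C.IsCentral) (v : V) (x : T) :
    (PsiData C).actMap (𝟙 v) (𝟙 x) = 𝟙 ((PsiData C).act v x) := by
  show C.map (𝟙 v) ⊗ₘ 𝟙 x = 𝟙 (C.obj v ⊗ x)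
  rw [hC.map_id, id_tensorHom_id]

theorem psiData_actMap_comp (C : CentralData V T) (hC : C.IsCentral)
    {v w u : V} {x y z : T} (f : v ⟶ w) (g : w ⟶ u) (h : x ⟶ y) (k : y ⟶ z) :
    (PsiData C).actMap (f ≫ g) (h ≫ k) =
      (PsiData C).actMap f h ≫ (PsiData C).actMap g k := by
  show C.map (f ≫ g) ⊗ₘ (h ≫ k) = (C.map f ⊗ₘ h) ≫ (C.map g ⊗ₘ k)
  rw [hC.map_comp, ← tensorHom_comp_tensorHom]

/-- `Ψ` on 1-morphisms: the unital module monoidal functor induced by a morphism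
of pairs. -/
def PsiHom {C : CentralData V T} {C' : CentralData V T'} (D : PairHomData C C') :
    UMMFunctorData (PsiData C) (PsiData C') where
  F := D.G
  φ₂ := D.φ₂
  φ₀ := D.φ₀
  s v x := tensorIso (D.γ v) (Iso.refl (D.G.obj x)) ≪≫ D.φ₂ (C.obj v) x

variable {M : Type u₂} [Category.{v₂} M] [MonoidalCategory M]

/-- The pair associated to a unital module monoidal category:
`F v := v ▷ 𝟙`, with the half-braiding, `φ₂` and `φ₀` of the paper. -/
def pairOfModMon (P : ModMonData V M)
    (hid : ∀ (v : V) (x : M), P.actMap (𝟙 v) (𝟙 x) = 𝟙 (P.act v x))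
    (hcomp : ∀ {v w u : V} {x y z : M} (f : v ⟶ w) (g : w ⟶ u) (h : x ⟶ y) (k : y ⟶ z),
      P.actMap (f ≫ g) (h ≫ k) = P.actMap f h ≫ P.actMap g k) :
    CentralData V M where
  obj v := P.act v (𝟙_ M)
  map f := P.actMap f (𝟙 (𝟙_ M))
  halfBraiding v t := P.α₁ v (𝟙_ M) t ≪≫
    P.toModuleData.actIso hid hcomp v (λ_ t ≪≫ (ρ_ t).symm) ≪≫ (P.α₂ v t (𝟙_ M)).symm
  φ₂ v w := P.α₁ v (𝟙_ M) (P.act w (𝟙_ M)) ≪≫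
    P.toModuleData.actIso hid hcomp v (P.α₂ w (𝟙_ M) (𝟙_ M)) ≪≫
      (P.massoc v w (𝟙_ M ⊗ 𝟙_ M)).symm ≪≫
        P.toModuleData.actIso hid hcomp (v ⊗ w) (ρ_ (𝟙_ M))
  φ₀ := (P.munit (𝟙_ M)).symm

end Psi

end ModMonPaper
namespace ModMonPaper

section Helpers

variable {V : Type u₁} [Category.{v₁} V] [MonoidalCategory V] [BraidedCategory V]
variable {M : Type u₂} [Category.{v₂} M] [MonoidalCategory M]
variable (P : ModMonData V M)

/-- The structure morphism `s_{v,x} = (v ▷ λ_x) ∘ α¹_{v,1,x}`. -/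
def sHom (v : V) (x : M) : P.act v (𝟙_ M) ⊗ x ⟶ P.act v x :=
  (P.α₁ v (𝟙_ M) x).hom ≫ P.actMap (𝟙 v) (λ_ x).hom

theorem whisk_comp (hP : P.IsModMon) (v : V) {x y z : M} (f : x ⟶ y) (g : y ⟶ z) :
    P.actMap (𝟙 v) (f ≫ g) = P.actMap (𝟙 v) f ≫ P.actMap (𝟙 v) g := by
  simpa using hP.toIsModule.actMap_comp (𝟙 v) (𝟙 v) f g

theorem exchange (hP : P.IsModMon) {v w : V} {x y : M} (f : v ⟶ w) (g : x ⟶ y) :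
    P.actMap f (𝟙 x) ≫ P.actMap (𝟙 w) g = P.actMap f g := by
  rw [← hP.toIsModule.actMap_comp]; simp

theorem exchange' (hP : P.IsModMon) {v w : V} {x y : M} (f : v ⟶ w) (g : x ⟶ y) :
    P.actMap (𝟙 v) g ≫ P.actMap f (𝟙 y) = P.actMap f g := by
  rw [← hP.toIsModule.actMap_comp]; simp

theorem unit_whisker_cancel {a b : M} {f g : a ⟶ b}
    (h : 𝟙 (𝟙_ M) ⊗ₘ f = 𝟙 (𝟙_ M) ⊗ₘ g) : f = g := by
  simp only [id_tensorHom] at h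
  rw [← cancel_epi (λ_ a).hom, ← MonoidalCategory.leftUnitor_naturality,
    ← MonoidalCategory.leftUnitor_naturality, h]

theorem munit_whisker_cancel (hP : P.IsModMon) {a b : M} {f g : a ⟶ b}
    (h : P.actMap (𝟙 (𝟙_ V)) f = P.actMap (𝟙 (𝟙_ V)) g) : f = g := by
  rw [← cancel_epi (P.munit a).hom, ← hP.toIsModule.munit_natural,
    ← hP.toIsModule.munit_natural, h]

theorem triangle' (y : M) :
    (α_ (𝟙_ M) (𝟙_ M) y).hom ≫ (𝟙 (𝟙_ M) ⊗ₘ (λ_ y).hom) = ((ρ_ (𝟙_ M)).hom ⊗ₘ 𝟙 y) := by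
  rw [id_tensorHom, tensorHom_id]; exact MonoidalCategory.triangle _ _

theorem triangle'' (x y : M) :
    (α_ x (𝟙_ M) y).hom ≫ (𝟙 x ⊗ₘ (λ_ y).hom) = ((ρ_ x).hom ⊗ₘ 𝟙 y) := by
  rw [id_tensorHom, tensorHom_id]; exact MonoidalCategory.triangle _ _

theorem lt' (x y : M) :
    (α_ (𝟙_ M) x y).hom ≫ (λ_ (x ⊗ y)).hom = ((λ_ x).hom ⊗ₘ 𝟙 y) := by
  rw [tensorHom_id, MonoidalCategory.leftUnitor_tensor_hom]; simp

theorem alpha2_unit (hP : P.IsModMon) (v : V) (x : M) :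
    (P.α₂ v (𝟙_ M) x).hom ≫ P.actMap (𝟙 v) (λ_ x).hom = (λ_ (P.act v x)).hom := by
  apply unit_whisker_cancel
  have key : (α_ (𝟙_ M) (𝟙_ M) (P.act v x)).hom ≫
        (𝟙 (𝟙_ M) ⊗ₘ ((P.α₂ v (𝟙_ M) x).hom ≫ P.actMap (𝟙 v) (λ_ x).hom)) ≫
        (P.α₂ v (𝟙_ M) x).hom
      = (α_ (𝟙_ M) (𝟙_ M) (P.act v x)).hom ≫
        (𝟙 (𝟙_ M) ⊗ₘ (λ_ (P.act v x)).hom) ≫ (P.α₂ v (𝟙_ M) x).hom := by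
    have split : 𝟙 (𝟙_ M) ⊗ₘ ((P.α₂ v (𝟙_ M) x).hom ≫ P.actMap (𝟙 v) (λ_ x).hom)
        = (𝟙 (𝟙_ M) ⊗ₘ (P.α₂ v (𝟙_ M) x).hom) ≫ (𝟙 (𝟙_ M) ⊗ₘ P.actMap (𝟙 v) (λ_ x).hom) := by
      rw [tensorHom_comp_tensorHom, comp_id]
    have hnat := hP.α₂_natural (𝟙 v) (𝟙 (𝟙_ M)) (λ_ x).hom
    have hnat2 := hP.α₂_natural (𝟙 v) (ρ_ (𝟙_ M)).hom (𝟙 x)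
    rw [hP.toIsModule.actMap_id] at hnat2
    calc (α_ (𝟙_ M) (𝟙_ M) (P.act v x)).hom ≫
          (𝟙 (𝟙_ M) ⊗ₘ ((P.α₂ v (𝟙_ M) x).hom ≫ P.actMap (𝟙 v) (λ_ x).hom)) ≫
          (P.α₂ v (𝟙_ M) x).hom
        = ((α_ (𝟙_ M) (𝟙_ M) (P.act v x)).hom ≫ (𝟙 (𝟙_ M) ⊗ₘ (P.α₂ v (𝟙_ M) x).hom) ≫
            (P.α₂ v (𝟙_ M) ((𝟙_ M) ⊗ x)).hom) ≫ P.actMap (𝟙 v) (𝟙 (𝟙_ M) ⊗ₘ (λ_ x).hom) := by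
          rw [split]; simp only [Category.assoc]; rw [hnat]
      _ = (P.α₂ v ((𝟙_ M) ⊗ (𝟙_ M)) x).hom ≫ P.actMap (𝟙 v) (α_ (𝟙_ M) (𝟙_ M) x).hom ≫
            P.actMap (𝟙 v) (𝟙 (𝟙_ M) ⊗ₘ (λ_ x).hom) := by
          rw [hP.α₂_assoc]; simp
      _ = (P.α₂ v ((𝟙_ M) ⊗ (𝟙_ M)) x).hom ≫ P.actMap (𝟙 v) ((ρ_ (𝟙_ M)).hom ⊗ₘ 𝟙 x) := by
          rw [← whisk_comp P hP, triangle']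
      _ = ((ρ_ (𝟙_ M)).hom ⊗ₘ 𝟙 (P.act v x)) ≫ (P.α₂ v (𝟙_ M) x).hom := by rw [← hnat2]
      _ = (α_ (𝟙_ M) (𝟙_ M) (P.act v x)).hom ≫
            (𝟙 (𝟙_ M) ⊗ₘ (λ_ (P.act v x)).hom) ≫ (P.α₂ v (𝟙_ M) x).hom := by
          rw [← Category.assoc, triangle']
  have k2 := (cancel_epi (α_ (𝟙_ M) (𝟙_ M) (P.act v x)).hom).1 key
  exact (cancel_mono (P.α₂ v (𝟙_ M) x).hom).1 k2


theorem alpha1_unitV_aux (hP : P.IsModMon) (v : V) (m n : M) :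
    P.actMap (𝟙 v) ((P.α₁ (𝟙_ V) m n).hom ≫ (P.munit (m ⊗ n)).hom)
      = P.actMap (𝟙 v) ((P.munit m).hom ⊗ₘ 𝟙 n) := by
  haveI : IsIso ((P.massoc v (𝟙_ V) m).hom ⊗ₘ 𝟙 n) :=
    ⟨(P.massoc v (𝟙_ V) m).inv ⊗ₘ 𝟙 n,
      by rw [tensorHom_comp_tensorHom]; simp, by rw [tensorHom_comp_tensorHom]; simp⟩
  rw [← cancel_epi ((P.α₁ v (P.act (𝟙_ V) m) n).hom),
    ← cancel_epi (((P.massoc v (𝟙_ V) m).hom ⊗ₘ 𝟙 n))]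
  have hms := hP.α₁_massoc v (𝟙_ V) m n
  have htri := hP.toIsModule.triangle v (m ⊗ n)
  have hn1 := hP.α₁_natural (ρ_ v).hom (𝟙 m) (𝟙 n)
  rw [id_tensorHom_id] at hn1
  have hn2 := hP.α₁_natural (𝟙 v) (P.munit m).hom (𝟙 n)
  have htri2 := hP.toIsModule.triangle v m
  calc ((P.massoc v (𝟙_ V) m).hom ⊗ₘ 𝟙 n) ≫ (P.α₁ v (P.act (𝟙_ V) m) n).hom ≫
        P.actMap (𝟙 v) ((P.α₁ (𝟙_ V) m n).hom ≫ (P.munit (m ⊗ n)).hom)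
      = (((P.massoc v (𝟙_ V) m).hom ⊗ₘ 𝟙 n) ≫ (P.α₁ v (P.act (𝟙_ V) m) n).hom ≫
          P.actMap (𝟙 v) (P.α₁ (𝟙_ V) m n).hom) ≫ P.actMap (𝟙 v) (P.munit (m ⊗ n)).hom := by
        rw [whisk_comp P hP]; simp only [Category.assoc]
    _ = (P.α₁ (v ⊗ 𝟙_ V) m n).hom ≫ (P.massoc v (𝟙_ V) (m ⊗ n)).hom ≫
          P.actMap (𝟙 v) (P.munit (m ⊗ n)).hom := by rw [hms]; simp only [Category.assoc]
    _ = (P.α₁ (v ⊗ 𝟙_ V) m n).hom ≫ P.actMap (ρ_ v).hom (𝟙 (m ⊗ n)) := by rw [htri]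
    _ = (P.actMap (ρ_ v).hom (𝟙 m) ⊗ₘ 𝟙 n) ≫ (P.α₁ v m n).hom := by rw [hn1]
    _ = (((P.massoc v (𝟙_ V) m).hom ≫ P.actMap (𝟙 v) (P.munit m).hom) ⊗ₘ 𝟙 n) ≫
          (P.α₁ v m n).hom := by rw [htri2]
    _ = ((P.massoc v (𝟙_ V) m).hom ⊗ₘ 𝟙 n) ≫ (P.actMap (𝟙 v) (P.munit m).hom ⊗ₘ 𝟙 n) ≫
          (P.α₁ v m n).hom := by rw [← Category.assoc, tensorHom_comp_tensorHom, comp_id]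
    _ = ((P.massoc v (𝟙_ V) m).hom ⊗ₘ 𝟙 n) ≫ (P.α₁ v (P.act (𝟙_ V) m) n).hom ≫
          P.actMap (𝟙 v) ((P.munit m).hom ⊗ₘ 𝟙 n) := by rw [hn2]

theorem alpha1_unitV (hP : P.IsModMon) (m n : M) :
    (P.α₁ (𝟙_ V) m n).hom ≫ (P.munit (m ⊗ n)).hom = ((P.munit m).hom ⊗ₘ 𝟙 n) :=
  munit_whisker_cancel P hP (alpha1_unitV_aux P hP (𝟙_ V) m n)

theorem sHom_natural (hP : P.IsModMon) {v w : V} {x y : M} (f : v ⟶ w) (g : x ⟶ y) :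
    (P.actMap f (𝟙 (𝟙_ M)) ⊗ₘ g) ≫ sHom P w y = sHom P v x ≫ P.actMap f g := by
  unfold sHom
  have h1 := hP.α₁_natural f (𝟙 (𝟙_ M)) g
  have h2 : (𝟙 (𝟙_ M) ⊗ₘ g) ≫ (λ_ y).hom = (λ_ x).hom ≫ g := by
    rw [id_tensorHom]; exact MonoidalCategory.leftUnitor_naturality g
  rw [← Category.assoc, h1, Category.assoc, ← hP.toIsModule.actMap_comp, comp_id, h2,
    show P.actMap f ((λ_ x).hom ≫ g) = P.actMap (𝟙 v) (λ_ x).hom ≫ P.actMap f g from by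
      rw [← hP.toIsModule.actMap_comp, id_comp],
    Category.assoc]

theorem sHom_nat2 (hP : P.IsModMon) (v : V) {x y : M} (f : x ⟶ y) :
    (𝟙 (P.act v (𝟙_ M)) ⊗ₘ f) ≫ sHom P v y = sHom P v x ≫ P.actMap (𝟙 v) f := by
  have h := sHom_natural P hP (𝟙 v) f
  rwa [hP.toIsModule.actMap_id] at h

theorem sHom_alpha1 (hP : P.IsModMon) (v : V) (x y : M) :
    (α_ (P.act v (𝟙_ M)) x y).hom ≫ sHom P v (x ⊗ y)
      = (sHom P v x ⊗ₘ 𝟙 y) ≫ (P.α₁ v x y).hom := by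
  unfold sHom
  have hsplit : (((P.α₁ v (𝟙_ M) x).hom ≫ P.actMap (𝟙 v) (λ_ x).hom) ⊗ₘ 𝟙 y)
      = ((P.α₁ v (𝟙_ M) x).hom ⊗ₘ 𝟙 y) ≫ (P.actMap (𝟙 v) (λ_ x).hom ⊗ₘ 𝟙 y) := by
    rw [tensorHom_comp_tensorHom, comp_id]
  have hn := hP.α₁_natural (𝟙 v) (λ_ x).hom (𝟙 y)
  have hassoc := hP.α₁_assoc v (𝟙_ M) x y
  rw [hsplit, Category.assoc, hn]
  rw [show P.actMap (𝟙 v) ((λ_ x).hom ⊗ₘ 𝟙 y)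
      = P.actMap (𝟙 v) (α_ (𝟙_ M) x y).hom ≫ P.actMap (𝟙 v) (λ_ (x ⊗ y)).hom from by
    rw [← whisk_comp P hP, lt']]
  rw [← Category.assoc, ← Category.assoc, ← Category.assoc]
  rw [Category.assoc ((P.α₁ v (𝟙_ M) x).hom ⊗ₘ 𝟙 y)]
  rw [hassoc]

theorem sHom_triangle (hP : P.IsModMon) (x : M) :
    sHom P (𝟙_ V) x ≫ (P.munit x).hom = ((P.munit (𝟙_ M)).hom ⊗ₘ 𝟙 x) ≫ (λ_ x).hom := by
  unfold sHom
  rw [Category.assoc, hP.toIsModule.munit_natural, ← Category.assoc, alpha1_unitV P hP]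

theorem massoc_conj (hP : P.IsModMon) (v w : V) {m n : M} (f : m ⟶ n) :
    (P.massoc v w m).inv ≫ P.actMap (𝟙 (v ⊗ w)) f ≫ (P.massoc v w n).hom
      = P.actMap (𝟙 v) (P.actMap (𝟙 w) f) := by
  rw [Iso.inv_comp_eq]
  have h := hP.toIsModule.massoc_natural (𝟙 v) (𝟙 w) f
  rwa [id_tensorHom_id] at h



theorem sHom_alpha2 (hP : P.IsModMon) (v : V) (x y : M) :
    (α_ x (P.act v (𝟙_ M)) y).inv ≫
      (((P.α₂ v x (𝟙_ M)).hom ≫ P.actMap (𝟙 v) ((ρ_ x).hom ≫ (λ_ x).inv) ≫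
          (P.α₁ v (𝟙_ M) x).inv) ⊗ₘ 𝟙 y) ≫
      (α_ (P.act v (𝟙_ M)) x y).hom ≫ sHom P v (x ⊗ y)
      = (𝟙 x ⊗ₘ sHom P v y) ≫ (P.α₂ v x y).hom := by
  unfold sHom
  have hsplit : (((P.α₂ v x (𝟙_ M)).hom ≫ P.actMap (𝟙 v) ((ρ_ x).hom ≫ (λ_ x).inv) ≫
          (P.α₁ v (𝟙_ M) x).inv) ⊗ₘ 𝟙 y)
      = ((P.α₂ v x (𝟙_ M)).hom ⊗ₘ 𝟙 y) ≫
        (P.actMap (𝟙 v) ((ρ_ x).hom ≫ (λ_ x).inv) ⊗ₘ 𝟙 y) ≫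
        ((P.α₁ v (𝟙_ M) x).inv ⊗ₘ 𝟙 y) := by
    simp only [tensorHom_comp_tensorHom, comp_id]
  have hK : ((P.α₁ v (𝟙_ M) x).inv ⊗ₘ 𝟙 y) ≫ (α_ (P.act v (𝟙_ M)) x y).hom ≫
        (P.α₁ v (𝟙_ M) (x ⊗ y)).hom
      = (P.α₁ v ((𝟙_ M) ⊗ x) y).hom ≫ P.actMap (𝟙 v) (α_ (𝟙_ M) x y).hom := by
    rw [← hP.α₁_assoc v (𝟙_ M) x y, ← Category.assoc, tensorHom_comp_tensorHom, Iso.inv_hom_id]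
    simp
  have hn1 := hP.α₁_natural (𝟙 v) ((ρ_ x).hom ≫ (λ_ x).inv) (𝟙 y)
  have hcoh : (((ρ_ x).hom ≫ (λ_ x).inv) ⊗ₘ 𝟙 y) ≫ (α_ (𝟙_ M) x y).hom ≫ (λ_ (x ⊗ y)).hom
      = (α_ x (𝟙_ M) y).hom ≫ (𝟙 x ⊗ₘ (λ_ y).hom) := by
    rw [lt', tensorHom_comp_tensorHom, Category.assoc, Iso.inv_hom_id, comp_id, triangle'']
    simp
  have hαα := hP.α₁_α₂ v x (𝟙_ M) y
  have hn2 := hP.α₂_natural (𝟙 v) (𝟙 x) (λ_ y).hom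
  rw [hsplit]
  simp only [Category.assoc]
  rw [reassoc_of% hK, reassoc_of% hn1, ← whisk_comp P hP, ← whisk_comp P hP, hcoh,
    whisk_comp P hP, reassoc_of% hαα, Iso.inv_hom_id_assoc, ← hn2,
    ← Category.assoc, tensorHom_comp_tensorHom, comp_id]


theorem lnat {x y : M} (f : x ⟶ y) :
    (𝟙 (𝟙_ M) ⊗ₘ f) ≫ (λ_ y).hom = (λ_ x).hom ≫ f := by
  rw [id_tensorHom]; exact MonoidalCategory.leftUnitor_naturality f

theorem sHom_pentagon_inner (hP : P.IsModMon) (w : V) (x : M) :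
    ((P.α₂ w (𝟙_ M) (𝟙_ M)).hom ⊗ₘ 𝟙 x) ≫ (P.α₁ w ((𝟙_ M) ⊗ (𝟙_ M)) x).hom ≫
      P.actMap (𝟙 w) (((ρ_ (𝟙_ M)).hom ⊗ₘ 𝟙 x) ≫ (λ_ x).hom)
    = ((λ_ (P.act w (𝟙_ M))).hom ⊗ₘ 𝟙 x) ≫ sHom P w x := by
  rw [show ((ρ_ (𝟙_ M)).hom ⊗ₘ 𝟙 x) ≫ (λ_ x).hom
      = (α_ (𝟙_ M) (𝟙_ M) x).hom ≫ (𝟙 (𝟙_ M) ⊗ₘ (λ_ x).hom) ≫ (λ_ x).hom from by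
    rw [← triangle']; simp only [Category.assoc]]
  rw [whisk_comp P hP, whisk_comp P hP]
  rw [reassoc_of% (hP.α₁_α₂ w (𝟙_ M) (𝟙_ M) x)]
  have hn := hP.α₂_natural (𝟙 w) (𝟙 (𝟙_ M)) (λ_ x).hom
  rw [← reassoc_of% hn, alpha2_unit P hP w x]
  have l1 := lnat (M := M) (P.actMap (𝟙 w) (λ_ x).hom)
  have l2 := lnat (M := M) (P.α₁ w (𝟙_ M) x).hom
  rw [l1, reassoc_of% l2, reassoc_of% (lt' (P.act w (𝟙_ M)) x)]
  unfold sHom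
  simp only [Category.assoc]

theorem sHom_pentagon (hP : P.IsModMon) (v w : V) (x : M) :
    (((P.α₁ v (𝟙_ M) (P.act w (𝟙_ M))).hom ≫
        P.actMap (𝟙 v) (P.α₂ w (𝟙_ M) (𝟙_ M)).hom ≫
        (P.massoc v w ((𝟙_ M) ⊗ (𝟙_ M))).inv ≫
        P.actMap (𝟙 (v ⊗ w)) (ρ_ (𝟙_ M)).hom) ⊗ₘ 𝟙 x) ≫
      sHom P (v ⊗ w) x ≫ (P.massoc v w x).hom
      = (α_ (P.act v (𝟙_ M)) (P.act w (𝟙_ M)) x).hom ≫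
        (𝟙 (P.act v (𝟙_ M)) ⊗ₘ sHom P w x) ≫ sHom P v (P.act w x) := by
  have hsplit : (((P.α₁ v (𝟙_ M) (P.act w (𝟙_ M))).hom ≫
        P.actMap (𝟙 v) (P.α₂ w (𝟙_ M) (𝟙_ M)).hom ≫
        (P.massoc v w ((𝟙_ M) ⊗ (𝟙_ M))).inv ≫
        P.actMap (𝟙 (v ⊗ w)) (ρ_ (𝟙_ M)).hom) ⊗ₘ 𝟙 x)
      = ((P.α₁ v (𝟙_ M) (P.act w (𝟙_ M))).hom ⊗ₘ 𝟙 x) ≫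
        (P.actMap (𝟙 v) (P.α₂ w (𝟙_ M) (𝟙_ M)).hom ⊗ₘ 𝟙 x) ≫
        ((P.massoc v w ((𝟙_ M) ⊗ (𝟙_ M))).inv ⊗ₘ 𝟙 x) ≫
        (P.actMap (𝟙 (v ⊗ w)) (ρ_ (𝟙_ M)).hom ⊗ₘ 𝟙 x) := by
    simp only [tensorHom_comp_tensorHom, comp_id]
  rw [hsplit,
    show sHom P (v ⊗ w) x = (P.α₁ (v ⊗ w) (𝟙_ M) x).hom ≫
      P.actMap (𝟙 (v ⊗ w)) (λ_ x).hom from rfl]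
  -- T1 : move e ρ past α₁
  have t1 := hP.α₁_natural (𝟙 (v ⊗ w)) (ρ_ (𝟙_ M)).hom (𝟙 x)
  simp only [Category.assoc]
  rw [reassoc_of% t1,
    ← reassoc_of% (whisk_comp P hP (v ⊗ w) ((ρ_ (𝟙_ M)).hom ⊗ₘ 𝟙 x) (λ_ x).hom)]
  -- T2 : massoc inverse past α₁
  have hC : ((P.massoc v w ((𝟙_ M) ⊗ (𝟙_ M))).inv ⊗ₘ 𝟙 x) ≫
        (P.α₁ (v ⊗ w) ((𝟙_ M) ⊗ (𝟙_ M)) x).hom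
      = (P.α₁ v (P.act w ((𝟙_ M) ⊗ (𝟙_ M))) x).hom ≫
        P.actMap (𝟙 v) (P.α₁ w ((𝟙_ M) ⊗ (𝟙_ M)) x).hom ≫
        (P.massoc v w (((𝟙_ M) ⊗ (𝟙_ M)) ⊗ x)).inv := by
    rw [← cancel_mono (P.massoc v w (((𝟙_ M) ⊗ (𝟙_ M)) ⊗ x)).hom]
    simp only [Category.assoc, Iso.inv_hom_id, Category.comp_id]
    rw [← hP.α₁_massoc v w ((𝟙_ M) ⊗ (𝟙_ M)) x, ← Category.assoc, tensorHom_comp_tensorHom,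
      Iso.inv_hom_id]
    simp
  rw [reassoc_of% hC]
  -- T3 : conjugation by massoc
  rw [massoc_conj P hP v w (((ρ_ (𝟙_ M)).hom ⊗ₘ 𝟙 x) ≫ (λ_ x).hom)]
  have t4 := hP.α₁_natural (𝟙 v) (P.α₂ w (𝟙_ M) (𝟙_ M)).hom (𝟙 x)
  rw [reassoc_of% t4, ← whisk_comp P hP, ← whisk_comp P hP,
    sHom_pentagon_inner P hP w x, whisk_comp P hP]
  have t5 := hP.α₁_natural (𝟙 v) (λ_ (P.act w (𝟙_ M))).hom (𝟙 x)
  rw [← reassoc_of% t5]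
  rw [sHom_nat2 P hP v (sHom P w x), reassoc_of% (sHom_alpha1 P hP v (P.act w (𝟙_ M)) x)]
  rw [← Category.assoc, ← Category.assoc, tensorHom_comp_tensorHom, comp_id,
    show (P.α₁ v (𝟙_ M) (P.act w (𝟙_ M))).hom ≫
      P.actMap (𝟙 v) (λ_ (P.act w (𝟙_ M))).hom = sHom P v (P.act w (𝟙_ M)) from rfl]
  simp only [Category.assoc]



theorem sHom_pentagon' (hP : P.IsModMon) (v w : V) (x : M) :
    sHom P (v ⊗ w) x ≫ (P.massoc v w x).hom
      = ((P.actMap (𝟙 (v ⊗ w)) (ρ_ (𝟙_ M)).inv ≫ (P.massoc v w ((𝟙_ M) ⊗ (𝟙_ M))).hom ≫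
          P.actMap (𝟙 v) (P.α₂ w (𝟙_ M) (𝟙_ M)).inv ≫
          (P.α₁ v (𝟙_ M) (P.act w (𝟙_ M))).inv) ⊗ₘ 𝟙 x) ≫
        (α_ (P.act v (𝟙_ M)) (P.act w (𝟙_ M)) x).hom ≫
        (𝟙 (P.act v (𝟙_ M)) ⊗ₘ sHom P w x) ≫ sHom P v (P.act w x) := by
  rw [← sHom_pentagon P hP v w x, ← Category.assoc, tensorHom_comp_tensorHom, comp_id]
  have hid : (P.actMap (𝟙 (v ⊗ w)) (ρ_ (𝟙_ M)).inv ≫ (P.massoc v w ((𝟙_ M) ⊗ (𝟙_ M))).hom ≫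
        P.actMap (𝟙 v) (P.α₂ w (𝟙_ M) (𝟙_ M)).inv ≫ (P.α₁ v (𝟙_ M) (P.act w (𝟙_ M))).inv) ≫
      ((P.α₁ v (𝟙_ M) (P.act w (𝟙_ M))).hom ≫ P.actMap (𝟙 v) (P.α₂ w (𝟙_ M) (𝟙_ M)).hom ≫
        (P.massoc v w ((𝟙_ M) ⊗ (𝟙_ M))).inv ≫ P.actMap (𝟙 (v ⊗ w)) (ρ_ (𝟙_ M)).hom)
      = 𝟙 _ := by
    simp only [Category.assoc, Iso.inv_hom_id_assoc]
    rw [← reassoc_of% (whisk_comp P hP v (P.α₂ w (𝟙_ M) (𝟙_ M)).inv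
      (P.α₂ w (𝟙_ M) (𝟙_ M)).hom), Iso.inv_hom_id, hP.toIsModule.actMap_id, id_comp,
      Iso.hom_inv_id_assoc, ← whisk_comp P hP, Iso.inv_hom_id, hP.toIsModule.actMap_id]
  rw [hid, id_tensorHom_id, id_comp]

/-- Inverse of `sHom`. -/
def sInv (v : V) (x : M) : P.act v x ⟶ P.act v (𝟙_ M) ⊗ x :=
  P.actMap (𝟙 v) (λ_ x).inv ≫ (P.α₁ v (𝟙_ M) x).inv

theorem sHom_sInv (hP : P.IsModMon) (v : V) (x : M) :
    sHom P v x ≫ sInv P v x = 𝟙 _ := by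
  unfold sHom sInv
  rw [Category.assoc, ← reassoc_of% (whisk_comp P hP v (λ_ x).hom (λ_ x).inv),
    Iso.hom_inv_id, hP.toIsModule.actMap_id, id_comp, Iso.hom_inv_id]

theorem sInv_sHom (hP : P.IsModMon) (v : V) (x : M) :
    sInv P v x ≫ sHom P v x = 𝟙 _ := by
  unfold sHom sInv
  rw [Category.assoc, Iso.inv_hom_id_assoc, ← whisk_comp P hP, Iso.inv_hom_id,
    hP.toIsModule.actMap_id]

theorem sHom_isIso (hP : P.IsModMon) (v : V) (x : M) : IsIso (sHom P v x) :=
  ⟨sInv P v x, sHom_sInv P hP v x, sInv_sHom P hP v x⟩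

theorem sInv_natural (hP : P.IsModMon) {v w : V} {x y : M} (f : v ⟶ w) (g : x ⟶ y) :
    P.actMap f g ≫ sInv P w y = sInv P v x ≫ (P.actMap f (𝟙 (𝟙_ M)) ⊗ₘ g) := by
  haveI := sHom_isIso P hP v x
  rw [← cancel_epi (sHom P v x), ← reassoc_of% (sHom_natural P hP f g),
    sHom_sInv P hP, comp_id, reassoc_of% (sHom_sInv P hP v x)]

theorem sInv_nat2 (hP : P.IsModMon) (v : V) {x y : M} (f : x ⟶ y) :
    P.actMap (𝟙 v) f ≫ sInv P v y = sInv P v x ≫ (𝟙 (P.act v (𝟙_ M)) ⊗ₘ f) := by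
  have h := sInv_natural P hP (𝟙 v) f
  rwa [hP.toIsModule.actMap_id] at h

theorem sInv_alpha1 (hP : P.IsModMon) (v : V) (x y : M) :
    (P.α₁ v x y).hom ≫ sInv P v (x ⊗ y)
      = (sInv P v x ⊗ₘ 𝟙 y) ≫ (α_ (P.act v (𝟙_ M)) x y).hom := by
  haveI := sHom_isIso P hP v x
  haveI : IsIso (sHom P v x ⊗ₘ 𝟙 y) :=
    ⟨sInv P v x ⊗ₘ 𝟙 y, by rw [tensorHom_comp_tensorHom, sHom_sInv P hP]; simp,
      by rw [tensorHom_comp_tensorHom, sInv_sHom P hP]; simp⟩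
  rw [← cancel_epi (sHom P v x ⊗ₘ 𝟙 y), ← reassoc_of% (sHom_alpha1 P hP v x y),
    sHom_sInv P hP, comp_id, ← Category.assoc, tensorHom_comp_tensorHom, sHom_sInv P hP v x, comp_id,
    id_tensorHom_id, id_comp]

theorem sInv_alpha2 (hP : P.IsModMon) (v : V) (x y : M) :
    (P.α₂ v x y).hom ≫ sInv P v (x ⊗ y)
      = (𝟙 x ⊗ₘ sInv P v y) ≫ (α_ x (P.act v (𝟙_ M)) y).inv ≫
        (((P.α₂ v x (𝟙_ M)).hom ≫ P.actMap (𝟙 v) ((ρ_ x).hom ≫ (λ_ x).inv) ≫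
          (P.α₁ v (𝟙_ M) x).inv) ⊗ₘ 𝟙 y) ≫
        (α_ (P.act v (𝟙_ M)) x y).hom := by
  haveI := sHom_isIso P hP v y
  haveI : IsIso (𝟙 x ⊗ₘ sHom P v y) :=
    ⟨𝟙 x ⊗ₘ sInv P v y, by rw [tensorHom_comp_tensorHom, sHom_sInv P hP]; simp,
      by rw [tensorHom_comp_tensorHom, sInv_sHom P hP]; simp⟩
  rw [← cancel_epi (𝟙 x ⊗ₘ sHom P v y), ← reassoc_of% (sHom_alpha2 P hP v x y),
    sHom_sInv P hP, comp_id, tensorHom_comp_tensorHom_assoc, sHom_sInv P hP v y, comp_id,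
    id_tensorHom_id, id_comp]

theorem sInv_triangle (hP : P.IsModMon) (x : M) :
    sInv P (𝟙_ V) x ≫ ((P.munit (𝟙_ M)).hom ⊗ₘ 𝟙 x) ≫ (λ_ x).hom = (P.munit x).hom := by
  haveI := sHom_isIso P hP (𝟙_ V) x
  rw [← cancel_epi (sHom P (𝟙_ V) x), reassoc_of% (sHom_sInv P hP (𝟙_ V) x),
    sHom_triangle P hP x]

theorem sInv_pentagon (hP : P.IsModMon) (v w : V) (x : M) :
    sInv P (v ⊗ w) x ≫
      ((P.actMap (𝟙 (v ⊗ w)) (ρ_ (𝟙_ M)).inv ≫ (P.massoc v w ((𝟙_ M) ⊗ (𝟙_ M))).hom ≫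
          P.actMap (𝟙 v) (P.α₂ w (𝟙_ M) (𝟙_ M)).inv ≫
          (P.α₁ v (𝟙_ M) (P.act w (𝟙_ M))).inv) ⊗ₘ 𝟙 x) ≫
      (α_ (P.act v (𝟙_ M)) (P.act w (𝟙_ M)) x).hom
      = (P.massoc v w x).hom ≫ P.actMap (𝟙 v) (sInv P w x) ≫
        sInv P v (P.act w (𝟙_ M) ⊗ x) := by
  haveI := sHom_isIso P hP (v ⊗ w) x
  rw [← cancel_epi (sHom P (v ⊗ w) x), reassoc_of% (sHom_sInv P hP (v ⊗ w) x),
    reassoc_of% (sHom_pentagon' P hP v w x),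
    ← reassoc_of% (sHom_nat2 P hP v (sInv P w x)), sHom_sInv P hP, comp_id,
    tensorHom_comp_tensorHom, sHom_sInv P hP w x]
  simp
end Helpers

end ModMonPaper
namespace ModMonPaper

section Stmt15

variable {V : Type u₁} [Category.{v₁} V] [MonoidalCategory V] [BraidedCategory V]
variable {M : Type u₂} [Category.{v₂} M] [MonoidalCategory M]

/-- Let `M` be a unital module monoidal category, `(M, F)` the
associated pair and `M' := Ψ(M, F)`. Then the identity functor with `φ₂ = id`,
`φ₀ = id` and `s := (id ▷ l) ∘ α¹` is a unital module monoidal functor `M ⟶ M'`, and it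
is an equivalence of unital module monoidal categories whose underlying functor is the
identity. -/
theorem psi_pairOfModMon_id_equivalence (P : ModMonData V M) (hP : P.IsModMon) :
    let C : CentralData V M := pairOfModMon P hP.toIsModule.actMap_id
      (fun f g h k => hP.toIsModule.actMap_comp f g h k);
    let D : UMMFunctorData P (PsiData C) :=
      { F := 𝟭 M
        φ₂ := fun x y => Iso.refl (x ⊗ y)
        φ₀ := Iso.refl (𝟙_ M)
        s := fun v x => P.α₁ v (𝟙_ M) x ≪≫
          P.toModuleData.actIso hP.toIsModule.actMap_id
            (fun f g h k => hP.toIsModule.actMap_comp f g h k) v (λ_ x) };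
    D.IsUMMFunctor ∧ D.F = 𝟭 M ∧ D.IsEquiv := by
  intro C D
  refine ⟨⟨?_, ?_, ?_, ?_, ?_, ?_, ?_, ?_, ?_⟩, rfl, ?_⟩
  · -- φ₂_natural
    intro x x' y y' f g
    unfold D
    simp
  · -- hexagon
    intro x y z
    unfold D
    simp
  · -- φ₀_left
    intro x
    unfold D
    simp
  · -- φ₀_right
    intro x
    unfold D
    simp
  · -- s_natural
    intro v w x y f g
    unfold D C
    dsimp only [PsiData, pairOfModMon, ModuleData.actIso, Functor.id_map, Functor.id_obj,
      Iso.trans_hom, Iso.trans_inv, Iso.symm_hom, Iso.symm_inv, tensorIso_hom,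
      Iso.refl_hom, Iso.refl_inv]
    simpa only [sHom, Category.assoc] using sHom_natural P hP f g
  · -- s_pentagon
    intro v w x
    unfold D C
    dsimp only [PsiData, pairOfModMon, ModuleData.actIso, Functor.id_map, Functor.id_obj,
      Iso.trans_hom, Iso.trans_inv, Iso.symm_hom, Iso.symm_inv, tensorIso_hom,
      Iso.refl_hom, Iso.refl_inv]
    simp only [tensorIso_hom, Iso.symm_hom, Iso.symm_inv, Iso.trans_hom, Iso.trans_inv, Iso.refl_hom, Iso.refl_inv]
    rw [hP.toIsModule.actMap_id]
    simpa only [sHom, Category.assoc] using sHom_pentagon' P hP v w x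
  · -- s_triangle
    intro x
    unfold D C
    dsimp only [PsiData, pairOfModMon, ModuleData.actIso, Functor.id_map, Functor.id_obj,
      Iso.trans_hom, Iso.trans_inv, Iso.symm_hom, Iso.symm_inv, tensorIso_hom,
      Iso.refl_hom, Iso.refl_inv]
    simp only [tensorIso_hom, Iso.symm_hom, Iso.symm_inv, Iso.trans_hom, Iso.trans_inv, Iso.refl_hom, Iso.refl_inv]
    simpa only [sHom, Category.assoc] using sHom_triangle P hP x
  · -- compα₁
    intro v x y
    unfold D C
    dsimp only [PsiData, pairOfModMon, ModuleData.actIso, Functor.id_map, Functor.id_obj,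
      Iso.trans_hom, Iso.trans_inv, Iso.symm_hom, Iso.symm_inv, tensorIso_hom,
      Iso.refl_hom, Iso.refl_inv]
    simp only [hP.toIsModule.actMap_id, id_tensorHom_id, Category.id_comp, Category.comp_id,
      Category.assoc]
    simpa only [sHom, Category.assoc] using sHom_alpha1 P hP v x y
  · -- compα₂
    intro v x y
    unfold D C
    dsimp only [PsiData, pairOfModMon, ModuleData.actIso, Functor.id_map, Functor.id_obj,
      Iso.trans_hom, Iso.trans_inv, Iso.symm_hom, Iso.symm_inv, tensorIso_hom,
      Iso.refl_hom, Iso.refl_inv]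
    simp only [tensorIso_hom, Iso.symm_hom, Iso.symm_inv, Iso.trans_hom, Iso.trans_inv, Iso.refl_hom, Iso.refl_inv]
    simp only [hP.toIsModule.actMap_id, id_tensorHom_id, Category.id_comp, Category.comp_id,
      Category.assoc]
    simpa only [sHom, Category.assoc] using sHom_alpha2 P hP v x y
  · -- equivalence
    refine ⟨{ F := 𝟭 M,
              φ₂ := fun x y => Iso.refl (x ⊗ y),
              φ₀ := Iso.refl (𝟙_ M),
              s := fun v x => (P.α₁ v (𝟙_ M) x ≪≫
                P.toModuleData.actIso hP.toIsModule.actMap_id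
                  (fun f g h k => hP.toIsModule.actMap_comp f g h k) v (λ_ x)).symm },
            ⟨?_, ?_, ?_, ?_, ?_, ?_, ?_, ?_, ?_⟩,
            (Functor.leftUnitor (𝟭 M)).symm, Functor.leftUnitor (𝟭 M), ?_, ?_⟩
    · -- φ₂_natural
      intro x x' y y' f g
      simp
    · -- hexagon
      intro x y z
      simp
    · -- φ₀_left
      intro x
      simp
    · -- φ₀_right
      intro x
      simp
    · -- s_natural
      intro v w x y f g
      unfold C
      dsimp only [PsiData, pairOfModMon, ModuleData.actIso, Functor.id_map, Functor.id_obj,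
        Iso.trans_hom, Iso.trans_inv, Iso.symm_hom, Iso.symm_inv, tensorIso_hom,
        Iso.refl_hom, Iso.refl_inv]
      simpa only [sInv, Category.assoc] using sInv_natural P hP f g
    · -- s_pentagon
      intro v w x
      unfold C
      dsimp only [PsiData, pairOfModMon, ModuleData.actIso, Functor.id_map, Functor.id_obj,
        Iso.trans_hom, Iso.trans_inv, Iso.symm_hom, Iso.symm_inv, tensorIso_hom,
        Iso.refl_hom, Iso.refl_inv]
      simp only [tensorIso_hom, Iso.symm_hom, Iso.symm_inv, Iso.trans_hom, Iso.trans_inv, Iso.refl_hom, Iso.refl_inv]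
      simpa only [sInv, Category.assoc] using sInv_pentagon P hP v w x
    · -- s_triangle
      intro x
      unfold C
      dsimp only [PsiData, pairOfModMon, ModuleData.actIso, Functor.id_map, Functor.id_obj,
        Iso.trans_hom, Iso.trans_inv, Iso.symm_hom, Iso.symm_inv, tensorIso_hom,
        Iso.refl_hom, Iso.refl_inv]
      simp only [tensorIso_hom, Iso.symm_hom, Iso.symm_inv, Iso.trans_hom, Iso.trans_inv, Iso.refl_hom, Iso.refl_inv]
      simpa only [sInv, Category.assoc] using sInv_triangle P hP x
    · -- compα₁
      intro v x y
      unfold C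
      dsimp only [PsiData, pairOfModMon, ModuleData.actIso, Functor.id_map, Functor.id_obj,
        Iso.trans_hom, Iso.trans_inv, Iso.symm_hom, Iso.symm_inv, tensorIso_hom,
        Iso.refl_hom, Iso.refl_inv]
      simp only [hP.toIsModule.actMap_id, id_tensorHom_id, Category.id_comp, Category.comp_id,
        Category.assoc]
      simpa only [sInv, Category.assoc] using sInv_alpha1 P hP v x y
    · -- compα₂
      intro v x y
      unfold C
      dsimp only [PsiData, pairOfModMon, ModuleData.actIso, Functor.id_map, Functor.id_obj,
        Iso.trans_hom, Iso.trans_inv, Iso.symm_hom, Iso.symm_inv, tensorIso_hom,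
        Iso.refl_hom, Iso.refl_inv]
      simp only [tensorIso_hom, Iso.symm_hom, Iso.symm_inv, Iso.trans_hom, Iso.trans_inv, Iso.refl_hom, Iso.refl_inv]
      simp only [hP.toIsModule.actMap_id, id_tensorHom_id, Category.id_comp, Category.comp_id,
        Category.assoc]
      simpa only [sInv, Category.assoc] using sInv_alpha2 P hP v x y
    · -- η is UMM NT
      refine ⟨fun x y => ?_, ?_, fun v x => ?_⟩ <;>
        · unfold C
          dsimp only [UMMFunctorData.id, UMMFunctorData.comp, PsiData, pairOfModMon,
            Functor.leftUnitor, Iso.symm_hom, Iso.symm_inv, Iso.trans_hom,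
            Functor.mapIso_hom, Functor.id_obj, Functor.id_map, Iso.refl_hom, Iso.refl_inv]
          all_goals simp [hP.toIsModule.actMap_id, D, Iso.trans]
          all_goals exact (P.α₁ v (𝟙_ M) x ≪≫ P.toModuleData.actIso hP.toIsModule.actMap_id (fun f g h k => hP.toIsModule.actMap_comp f g h k) v (λ_ x)).inv_hom_id.symm
    · -- ε is UMM NT
      refine ⟨fun x y => ?_, ?_, fun v x => ?_⟩ <;>
        · unfold C
          dsimp only [UMMFunctorData.id, UMMFunctorData.comp, PsiData, pairOfModMon,
            Functor.leftUnitor, Iso.symm_hom, Iso.symm_inv, Iso.trans_hom,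
            Functor.mapIso_hom, Functor.id_obj, Functor.id_map, Iso.refl_hom, Iso.refl_inv]
          all_goals simp [hP.toIsModule.actMap_id, D, Iso.trans]
          all_goals exact (P.α₁ v (𝟙_ M) x ≪≫ P.toModuleData.actIso hP.toIsModule.actMap_id (fun f g h k => hP.toIsModule.actMap_comp f g h k) v (λ_ x)).hom_inv_id

end Stmt15

end ModMonPaper
end

section
/- Let (G,φ₂^G,φ₀^G,γ^G) and (G',φ₂^{G'},φ₀^{G'},γ^{G'}) be morphisms of pairs (T,F) → (T',F') over a braided monoidal category V. If they induce the same unital module monoidal functor Ψ(T,F) → Ψ(T',F'), i.e. G = G', φ₂^G = φ₂^{G'}, φ₀^G = φ₀^{G'} and φ₂^G_{F(v),m}∘(γ^G_v⊗'id_{G(m)}) = φ₂^{G'}_{F(v),m}∘(γ^{G'}_v⊗'id_{G'(m)}) for all v ∈ V and m ∈ T, then γ^G = γ^{G'}, so the two morphisms of pairs are equal. In other words, the 2-functor Ψ is injective on 1-morphisms. -/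
open CategoryTheory MonoidalCategory Category

universe v₁ v₂ v₃ v₄ u₁ u₂ u₃ u₄

/-! Cancelling the isomorphism `φ₂` in the hypothesis at `m = 𝟙` leaves
`γ_v ⊗ id_{G(𝟙)} = γ'_v ⊗ id_{G(𝟙)}`, and whiskering with `G(𝟙) ≅ 𝟙` (via `φ₀`)
is injective. -/

namespace CategoryTheory.MonoidalCategory

theorem whiskerRight_injective_of_iso_unit {C : Type*} [Category C] [MonoidalCategory C]
    {X Y Z : C} (e : Z ≅ 𝟙_ C) : Function.Injective (fun f : X ⟶ Y => f ▷ Z) := by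
  intro f g h
  have hunit : f ▷ 𝟙_ C = g ▷ 𝟙_ C := by
    simpa only [whisker_exchange_assoc, ← whiskerLeft_comp, Iso.inv_hom_id, whiskerLeft_id,
      comp_id] using congrArg (fun k => X ◁ e.inv ≫ k ≫ Y ◁ e.hom) h
  simpa only [whiskerRight_id, cancel_epi, cancel_mono] using hunit

end CategoryTheory.MonoidalCategory

namespace ModMonPaper

section Stmt17

variable {V : Type u₁} [Category.{v₁} V] [MonoidalCategory V] [BraidedCategory V]
variable {T : Type u₂} [Category.{v₂} T] [MonoidalCategory T]
variable {T' : Type u₃} [Category.{v₃} T'] [MonoidalCategory T']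

theorem psi_injective_on_pairHoms_general {C : CentralData V T} {C' : CentralData V T'}
    (G : T ⥤ T') (φ₂ : ∀ x y : T, G.obj x ⊗ G.obj y ≅ G.obj (x ⊗ y))
    (φ₀ : 𝟙_ T' ≅ G.obj (𝟙_ T))
    (γ γ' : ∀ v : V, C'.obj v ≅ G.obj (C.obj v))
    (hs : ∀ (v : V) (m : T),
      ((γ v).hom ⊗ₘ 𝟙 (G.obj m)) ≫ (φ₂ (C.obj v) m).hom =
        ((γ' v).hom ⊗ₘ 𝟙 (G.obj m)) ≫ (φ₂ (C.obj v) m).hom) :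
    γ = γ' ∧ (⟨G, φ₂, φ₀, γ⟩ : PairHomData C C') = ⟨G, φ₂, φ₀, γ'⟩ := by
  have hγ : γ = γ' := by
    funext v
    ext
    apply whiskerRight_injective_of_iso_unit φ₀.symm
    simpa only [tensorHom_id, cancel_mono] using hs v (𝟙_ T)
  exact ⟨hγ, hγ ▸ rfl⟩

/-- If two morphisms of pairs `(G, φ₂, φ₀, γ)` and `(G, φ₂, φ₀, γ')`
with the same underlying monoidal functor induce the same unital module monoidal
functor under `Ψ`, i.e. `φ₂ ∘ (γ_v ⊗' id) = φ₂ ∘ (γ'_v ⊗' id)` for all `v, m`,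
then `γ = γ'`, so the two morphisms of pairs are equal: `Ψ` is injective on
1-morphisms. -/
theorem psi_injective_on_pairHoms {C : CentralData V T} {C' : CentralData V T'}
    (hC : C.IsCentral) (hC' : C'.IsCentral)
    (G : T ⥤ T') (φ₂ : ∀ x y : T, G.obj x ⊗ G.obj y ≅ G.obj (x ⊗ y))
    (φ₀ : 𝟙_ T' ≅ G.obj (𝟙_ T))
    (γ γ' : ∀ v : V, C'.obj v ≅ G.obj (C.obj v))
    (h : PairHomData.IsPairHom ⟨G, φ₂, φ₀, γ⟩)
    (h' : PairHomData.IsPairHom ⟨G, φ₂, φ₀, γ'⟩)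
    (hs : ∀ (v : V) (m : T),
      ((γ v).hom ⊗ₘ 𝟙 (G.obj m)) ≫ (φ₂ (C.obj v) m).hom =
        ((γ' v).hom ⊗ₘ 𝟙 (G.obj m)) ≫ (φ₂ (C.obj v) m).hom) :
    γ = γ' ∧ (⟨G, φ₂, φ₀, γ⟩ : PairHomData C C') = ⟨G, φ₂, φ₀, γ'⟩ :=
  psi_injective_on_pairHoms_general G φ₂ φ₀ γ γ' hs

end Stmt17

end ModMonPaper
end

section
/- Let G, H : (T,F) → (T',F') be morphisms of pairs over a braided monoidal category V and let η : G ⇒ H be a natural transformation which is a unital module monoidal natural transformation Ψ(G) ⇒ Ψ(H) between the induced unital module monoidal functors. Then η satisfies η_{F(v)}∘γ^G_v = γ^H_v for all v ∈ V, i.e. η is a 2-morphism of pairs G ⇒ H. Consequently, the 2-functor Ψ is fully faithful on 2-morphisms. -/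
open CategoryTheory MonoidalCategory Category

universe v₁ v₂ v₃ v₄ u₁ u₂ u₃ u₄

/-!
The module compatibility of `η` at `m = 𝟙` relates `(γ^G_v ⊗ 𝟙) ≫ φ₂^G ≫ η` and
`(𝟙 ⊗ η_𝟙) ≫ (γ^H_v ⊗ 𝟙) ≫ φ₂^H`. Whiskering with `φ₀^G` and using `φ₀^G ≫ η_𝟙 = φ₀^H`,
the right unit axioms of `G` and `H` reduce the two sides to `ρ` followed by
`γ^G_v ≫ η_{F v}` and by `γ^H_v`; then `ρ` cancels.
-/

namespace ModMonPaper

section UnitCancellation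

variable {V : Type u₁} [Category.{v₁} V] [MonoidalCategory V]
variable {W : Type u₂} [Category.{v₂} W] [MonoidalCategory W]

theorem MonFunctorData.app_eq_of_tensorUnit_app_eq {D E : MonFunctorData V W}
    (hD : D.IsMonFunctor) (hE : E.IsMonFunctor) (τ : D.F ⟶ E.F)
    (hτ : D.φ₀.hom ≫ τ.app (𝟙_ V) = E.φ₀.hom) {c : W} {x : V}
    (a : c ⟶ D.F.obj x) (b : c ⟶ E.F.obj x)
    (h : (a ⊗ₘ 𝟙 (D.F.obj (𝟙_ V))) ≫ (D.φ₂ x (𝟙_ V)).hom ≫ τ.app (x ⊗ 𝟙_ V) =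
      (𝟙 c ⊗ₘ τ.app (𝟙_ V)) ≫ (b ⊗ₘ 𝟙 (E.F.obj (𝟙_ V))) ≫ (E.φ₂ x (𝟙_ V)).hom) :
    a ≫ τ.app x = b := by
  refine (cancel_epi (ρ_ c).hom).mp ?_
  calc (ρ_ c).hom ≫ a ≫ τ.app x
      = (a ⊗ₘ 𝟙 (𝟙_ W)) ≫ (𝟙 (D.F.obj x) ⊗ₘ D.φ₀.hom) ≫ (D.φ₂ x (𝟙_ V)).hom ≫
          D.F.map (ρ_ x).hom ≫ τ.app x := by
        rw [reassoc_of% hD.φ₀_right x]; simp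
    _ = (𝟙 c ⊗ₘ D.φ₀.hom) ≫ ((a ⊗ₘ 𝟙 (D.F.obj (𝟙_ V))) ≫ (D.φ₂ x (𝟙_ V)).hom ≫
          τ.app (x ⊗ 𝟙_ V)) ≫ E.F.map (ρ_ x).hom := by
        simp only [assoc, τ.naturality, tensorHom_comp_tensorHom_assoc, id_comp, comp_id]
    _ = (b ⊗ₘ 𝟙 (𝟙_ W)) ≫ (𝟙 (E.F.obj x) ⊗ₘ E.φ₀.hom) ≫ (E.φ₂ x (𝟙_ V)).hom ≫
          E.F.map (ρ_ x).hom := by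
        simp only [h, ← hτ, assoc, tensorHom_comp_tensorHom_assoc, id_comp, comp_id]
    _ = (ρ_ c).hom ≫ b := by
        rw [hE.φ₀_right x]; simp

end UnitCancellation

section PairHom

variable {V : Type u₁} [Category.{v₁} V] [MonoidalCategory V]
variable {T : Type u₂} [Category.{v₂} T] [MonoidalCategory T]
variable {T' : Type u₃} [Category.{v₃} T'] [MonoidalCategory T']
variable {C : CentralData V T} {C' : CentralData V T'}

def PairHomData.toMonFunctorData (D : PairHomData C C') : MonFunctorData T T' :=
  ⟨D.G, D.φ₂, D.φ₀⟩

theorem PairHomData.IsPairHom.isMonFunctor {D : PairHomData C C'} (hD : D.IsPairHom) :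
    D.toMonFunctorData.IsMonFunctor :=
  ⟨hD.φ₂_natural, hD.hexagon, hD.φ₀_left, hD.φ₀_right⟩

end PairHom

section Psi

variable {V : Type u₁} [Category.{v₁} V] [MonoidalCategory V] [BraidedCategory V]
variable {T : Type u₂} [Category.{v₂} T] [MonoidalCategory T]
variable {T' : Type u₃} [Category.{v₃} T'] [MonoidalCategory T']

theorem isUMMNT_psiHom_module {C : CentralData V T} {C' : CentralData V T'}
    {D E : PairHomData C C'} (hC' : C'.IsCentral) {η : D.G ⟶ E.G}
    (hη : IsUMMNT (PsiHom D) (PsiHom E) η) (v : V) (x : T) :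
    ((D.γ v).hom ⊗ₘ 𝟙 (D.G.obj x)) ≫ (D.φ₂ (C.obj v) x).hom ≫ η.app (C.obj v ⊗ x) =
      (𝟙 (C'.obj v) ⊗ₘ η.app x) ≫ ((E.γ v).hom ⊗ₘ 𝟙 (E.G.obj x)) ≫
        (E.φ₂ (C.obj v) x).hom := by
  simpa [PsiHom, PsiData, hC'.map_id] using hη.2.2 v x

theorem pair2Mor_of_psi_ummNT_general {C : CentralData V T} {C' : CentralData V T'}
    (hC' : C'.IsCentral)
    (D E : PairHomData C C') (hD : D.IsPairHom) (hE : E.IsPairHom)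
    (η : D.G ⟶ E.G) (hη : IsUMMNT (PsiHom D) (PsiHom E) η) :
    (∀ v : V, (D.γ v).hom ≫ η.app (C.obj v) = (E.γ v).hom) ∧ IsPair2Mor D E η := by
  have hγ : ∀ v : V, (D.γ v).hom ≫ η.app (C.obj v) = (E.γ v).hom := fun v =>
    MonFunctorData.app_eq_of_tensorUnit_app_eq hD.isMonFunctor hE.isMonFunctor η hη.2.1 _ _
      (isUMMNT_psiHom_module hC' hη v (𝟙_ T))
  exact ⟨hγ, hη.1, hη.2.1, hγ⟩

/-- If a natural transformation `η : G ⟹ H` between morphisms of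
pairs is a unital module monoidal natural transformation `Ψ(G) ⟹ Ψ(H)`, then it
satisfies `η_{F v} ∘ γ^G_v = γ^H_v`, i.e. it is a 2-morphism of pairs: `Ψ` is fully
faithful on 2-morphisms. -/
theorem pair2Mor_of_psi_ummNT {C : CentralData V T} {C' : CentralData V T'}
    (hC : C.IsCentral) (hC' : C'.IsCentral)
    (D E : PairHomData C C') (hD : D.IsPairHom) (hE : E.IsPairHom)
    (η : D.G ⟶ E.G) (hη : IsUMMNT (PsiHom D) (PsiHom E) η) :
    (∀ v : V, (D.γ v).hom ≫ η.app (C.obj v) = (E.γ v).hom) ∧ IsPair2Mor D E η :=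
  pair2Mor_of_psi_ummNT_general hC' D E hD hE η hη

end Psi

end ModMonPaper
end
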